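/- arXiv:math/0303248 — 2 statements merged into one kernel-verified Lean document; each statement's English description precedes it below -/
import Mathlib

section
/- Let P_ε(x,ξ) = Σ_{j=1}^n a_j^ε(x)ξ_j + a_0^ε(x) be a family of first-order symbols on an open set U ⊆ ℝⁿ whose coefficient nets (a_k^ε), k = 0,…,n, have slow-scale growth in each derivative on compact sets, and let Γ ⊆ ℝⁿ∖{0} be an open cone such that for each compact K ⊂ U there are slow-scale nets (s_ε), (r_ε) and ε₀ > 0 with |Σ_{j=1}^n a_j^ε(x)ξ_j| ≥ (1+|ξ|)/s_ε for all (x,ξ) ∈ K×Γ with |ξ| ≥ r_ε and 0 < ε < ε₀. Then for each compact K ⊂ U: (i) there exist q > 0, a slow-scale net (r'_ε) and ε₁ > 0 with |P_ε(x,ξ)| ≥ ε^q (1+|ξ|) for all (x,ξ) ∈ K×Γ with |ξ| ≥ r'_ε and 0 < ε < ε₁ (condition (mh_1) with m₀ = 1); and (ii) for every multi-index α there exist slow-scale nets (s'_ε), (r''_ε) and ε₂ > 0 such that for all β with |β| ≤ 1: |∂_x^α ∂_ξ^β P_ε(x,ξ)| ≤ s'_ε |P_ε(x,ξ)| (1+|ξ|)^{−|β|}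 for all (x,ξ) ∈ K×Γ with |ξ| ≥ r''_ε and 0 < ε < ε₂ (condition (mh_2) with δ = 0, ρ = 1). -/
open scoped BigOperators Classical
noncomputable section

abbrev Rn (n : ℕ) : Type := EuclideanSpace ℝ (Fin n)

/-- A net of positive reals (indexed by ε ∈ (0,1]) is of slow scale. -/
def SlowScale (r : ℝ → ℝ) : Prop :=
  (∀ ε ∈ Set.Ioc (0:ℝ) 1, 0 < r ε) ∧
  ∀ p : ℝ, 0 < p → ∃ C > (0:ℝ), ∃ ε₁ ∈ Set.Ioo (0:ℝ) 1,
    ∀ ε ∈ Set.Ioo (0:ℝ) ε₁, r ε ^ p ≤ C / ε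

/-- Γ is a cone: stable under positive dilation. -/
def IsCone {n : ℕ} (Γ : Set (Rn n)) : Prop :=
  ∀ ξ ∈ Γ, ∀ t : ℝ, 0 < t → t • ξ ∈ Γ

/-- first-order partial derivative in direction i -/
def pd1 {n : ℕ} (i : Fin n) (f : Rn n → ℂ) : Rn n → ℂ :=
  fun x => fderiv ℝ f x (EuclideanSpace.single i 1)

/-- multi-index partial derivative ∂^α -/
def pd {n : ℕ} (α : Fin n → ℕ) (f : Rn n → ℂ) : Rn n → ℂ :=
  (((List.finRange n).map fun i => (pd1 i)^[α i]).foldr (· ∘ ·) id) f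

/-- |α| -/
def mdeg {n : ℕ} (α : Fin n → ℕ) : ℕ := ∑ i, α i

/-- α! as a complex number -/
def mfactC {n : ℕ} (α : Fin n → ℕ) : ℂ := ((∏ i, Nat.factorial (α i) : ℕ) : ℂ)

/-- ξ^α -/
def mpow {n : ℕ} (ξ : Rn n) (α : Fin n → ℕ) : ℂ := ∏ i, ((ξ i : ℝ) : ℂ) ^ α i

/-- the finite set of multi-indices of length ≤ m -/
def midx (n m : ℕ) : Finset (Fin n → ℕ) :=
  (Finset.Icc (fun _ => 0) (fun _ => m)).filter fun σ => mdeg σ ≤ m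

/-- ∂_x^α of a symbol P(x,ξ) -/
def pdx {n : ℕ} (α : Fin n → ℕ) (P : Rn n → Rn n → ℂ) : Rn n → Rn n → ℂ :=
  fun x ξ => pd α (fun y => P y ξ) x

/-- ∂_ξ^β of a symbol P(x,ξ) -/
def pdxi {n : ℕ} (β : Fin n → ℕ) (P : Rn n → Rn n → ℂ) : Rn n → Rn n → ℂ :=
  fun x ξ => pd β (fun η => P x η) ξ

/-- ξ·x as a complex number -/
def edotC {n : ℕ} (ξ x : Rn n) : ℂ := ((∑ i, ξ i * x i : ℝ) : ℂ)

/-- the symbol P_ε(x,ξ) = Σ_{|σ|≤m} a_σ^ε(x) ξ^σ -/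
def Psym {n : ℕ} (m : ℕ) (a : (Fin n → ℕ) → ℝ → Rn n → ℂ) (ε : ℝ) : Rn n → Rn n → ℂ :=
  fun x ξ => ∑ σ ∈ midx n m, a σ ε x * mpow ξ σ

/-- the action P_ε(x,D)u = Σ_{|σ|≤m} a_σ^ε(x) D^σ u, D^σ = (-i)^{|σ|} ∂^σ -/
def PDOapply {n : ℕ} (m : ℕ) (a : (Fin n → ℕ) → ℝ → Rn n → ℂ) (ε : ℝ)
    (u : Rn n → ℂ) : Rn n → ℂ :=
  fun x => ∑ σ ∈ midx n m, a σ ε x * ((-Complex.I) ^ mdeg σ * pd σ u x)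

/-- moderate net of smooth functions on Ω -/
def Moderate {n : ℕ} (Ω : Set (Rn n)) (u : ℝ → Rn n → ℂ) : Prop :=
  (∀ ε ∈ Set.Ioc (0:ℝ) 1, ContDiffOn ℝ (⊤ : ℕ∞) (u ε) Ω) ∧
  ∀ K : Set (Rn n), IsCompact K → K ⊆ Ω → ∀ α : Fin n → ℕ,
    ∃ N : ℕ, ∃ C > (0:ℝ), ∃ ε₀ ∈ Set.Ioo (0:ℝ) 1,
      ∀ ε ∈ Set.Ioo (0:ℝ) ε₀, ∀ x ∈ K, ‖pd α (u ε) x‖ ≤ C / ε ^ N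

/-- G^∞-regular net on Ω (ε-growth uniform in the derivative order) -/
def GInfReg {n : ℕ} (Ω : Set (Rn n)) (u : ℝ → Rn n → ℂ) : Prop :=
  ∀ K : Set (Rn n), IsCompact K → K ⊆ Ω → ∃ N : ℕ, ∀ α : Fin n → ℕ,
    ∃ C > (0:ℝ), ∃ ε₀ ∈ Set.Ioo (0:ℝ) 1, ∀ ε ∈ Set.Ioo (0:ℝ) ε₀, ∀ x ∈ K,
      ‖pd α (u ε) x‖ ≤ C / ε ^ N

/-- rapidly decreasing of moderate type in the cone Γ -/
def RapDecMod {n : ℕ} (Γ : Set (Rn n)) (h : ℝ → Rn n → ℂ) : Prop :=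
  ∃ M : ℕ, ∀ l : ℕ, ∃ C > (0:ℝ), ∃ ε₀ ∈ Set.Ioo (0:ℝ) 1, ∃ r : ℝ → ℝ, SlowScale r ∧
    ∀ ε ∈ Set.Ioo (0:ℝ) ε₀, ∀ ξ ∈ Γ, r ε ≤ ‖ξ‖ →
      ‖h ε ξ‖ ≤ C / (ε ^ M * (1 + ‖ξ‖) ^ l)

/-- Fourier transform F(g)(ξ) = ∫ g(x) e^{-iξ·x} dx -/
def FT {n : ℕ} (g : Rn n → ℂ) (ξ : Rn n) : ℂ :=
  ∫ x : Rn n, g x * Complex.exp (-Complex.I * edotC ξ x)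

/-- symbol of the transposed operator, via the expansion
    ᵗP(x,η) = Σ_{|σ|≤m} ((-1)^{|σ|}/σ!) (∂_ξ^σ ∂_x^σ P)(x,-η) -/
def tsymb {n : ℕ} (m : ℕ) (P : Rn n → Rn n → ℂ) (x η : Rn n) : ℂ :=
  ∑ σ ∈ midx n m, ((-1 : ℂ) ^ mdeg σ / mfactC σ) * pdx σ (pdxi σ P) x (-η)

/-- coefficients r_β(x,ξ) of the operator R(ξ;x,D) from the algebraic lemma,
    for general symbols A and Q -/
def rGen {n : ℕ} (m : ℕ) (A Q : Rn n → Rn n → ℂ) (β : Fin n → ℕ) (x ξ : Rn n) : ℂ :=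
  if β = (fun _ => 0) then
    (Q x (-ξ) - A x ξ) / A x ξ +
      ∑ γ ∈ (midx n m).filter (fun γ => 1 ≤ mdeg γ),
        (mfactC γ)⁻¹ * pdxi γ (fun x' ξ' => Q x' (-ξ')) x ξ *
          ((-Complex.I) ^ mdeg γ * pdx γ (fun x' ξ' => (A x' ξ')⁻¹) x ξ)
  else
    ∑ γ ∈ midx n (m - mdeg β),
      (mfactC β * mfactC γ)⁻¹ *
        pdxi (fun i => β i + γ i) (fun x' ξ' => Q x' (-ξ')) x ξ *
          ((-Complex.I) ^ mdeg γ * pdx γ (fun x' ξ' => (A x' ξ')⁻¹) x ξ)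

/-- the operator R(ξ;x,D)w = -Σ_{|β|≤m} r_β(x,ξ) D_x^β w -/
def RopGen {n : ℕ} (m : ℕ) (A Q : Rn n → Rn n → ℂ) (ξ : Rn n) (w : Rn n → ℂ) : Rn n → ℂ :=
  fun x => -∑ β ∈ midx n m, rGen m A Q β x ξ * ((-Complex.I) ^ mdeg β * pd β w x)

/-- coefficients of R_ε with A = P_ε, Q = ᵗP_ε -/
def RcoefT {n : ℕ} (m : ℕ) (P : Rn n → Rn n → ℂ) : (Fin n → ℕ) → Rn n → Rn n → ℂ :=
  rGen m P (tsymb m P)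

/-- the operator R_ε(ξ;x,D) with A = P_ε, Q = ᵗP_ε -/
def RopT {n : ℕ} (m : ℕ) (P : Rn n → Rn n → ℂ) (ξ : Rn n) : (Rn n → ℂ) → Rn n → ℂ :=
  RopGen m P (tsymb m P) ξ

/-- condition (mh_1) with explicit exponent q -/
def MH1w {n : ℕ} (P : ℝ → Rn n → Rn n → ℂ) (K Γ : Set (Rn n)) (m₀ q : ℝ) : Prop :=
  ∃ r : ℝ → ℝ, SlowScale r ∧ ∃ ε₀ > (0:ℝ), ∀ ε ∈ Set.Ioo (0:ℝ) ε₀,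
    ∀ x ∈ K, ∀ ξ ∈ Γ, r ε ≤ ‖ξ‖ → ε ^ q * (1 + ‖ξ‖) ^ m₀ ≤ ‖P ε x ξ‖

/-- condition (mh_1) -/
def MH1 {n : ℕ} (P : ℝ → Rn n → Rn n → ℂ) (K Γ : Set (Rn n)) (m₀ : ℝ) : Prop :=
  ∃ q > (0:ℝ), MH1w P K Γ m₀ q

/-- condition (mh_2) -/
def MH2 {n : ℕ} (m : ℕ) (P : ℝ → Rn n → Rn n → ℂ) (K Γ : Set (Rn n)) (δ ρ : ℝ) : Prop :=
  ∀ α : Fin n → ℕ, ∃ s : ℝ → ℝ, SlowScale s ∧ ∃ r : ℝ → ℝ, SlowScale r ∧ ∃ ε₁ > (0:ℝ),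
    ∀ β : Fin n → ℕ, mdeg β ≤ m → ∀ ε ∈ Set.Ioo (0:ℝ) ε₁, ∀ x ∈ K, ∀ ξ ∈ Γ, r ε ≤ ‖ξ‖ →
      ‖pdx α (pdxi β (P ε)) x ξ‖ ≤
        s ε * ‖P ε x ξ‖ * (1 + ‖ξ‖) ^ (δ * (mdeg α : ℝ) - ρ * (mdeg β : ℝ))

/-- b_m^ε(x) = Σ_{|α|=m} |a_α^ε(x)| -/
def bprin {n : ℕ} (m : ℕ) (a : (Fin n → ℕ) → ℝ → Rn n → ℂ) (ε : ℝ) (x : Rn n) : ℝ :=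
  ∑ σ ∈ (midx n m).filter (fun σ => mdeg σ = m), ‖a σ ε x‖

/-- principal symbol P_{ε,m}(x,ξ) = Σ_{|α|=m} a_α^ε(x) ξ^α -/
def Pprin {n : ℕ} (m : ℕ) (a : (Fin n → ℕ) → ℝ → Rn n → ℂ) (ε : ℝ) (x ξ : Rn n) : ℂ :=
  ∑ σ ∈ (midx n m).filter (fun σ => mdeg σ = m), a σ ε x * mpow ξ σ

/-- condition (st_1) on K × Γ -/
def ST1 {n : ℕ} (m : ℕ) (a : (Fin n → ℕ) → ℝ → Rn n → ℂ) (K Γ : Set (Rn n)) : Prop :=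
  ∃ s : ℝ → ℝ, SlowScale s ∧ ∃ r : ℝ → ℝ, SlowScale r ∧ ∃ ε₀ > (0:ℝ),
    ∀ ε ∈ Set.Ioo (0:ℝ) ε₀, ∀ x ∈ K, ∀ ξ ∈ Γ, r ε ≤ ‖ξ‖ →
      (s ε)⁻¹ * bprin m a ε x * (1 + ‖ξ‖) ^ m ≤ ‖Pprin m a ε x ξ‖

/-- condition (st_2) on K -/
def ST2 {n : ℕ} (m : ℕ) (a : (Fin n → ℕ) → ℝ → Rn n → ℂ) (K : Set (Rn n)) : Prop :=
  ∀ γ : Fin n → ℕ, ∃ s : ℝ → ℝ, SlowScale s ∧ ∃ r : ℝ → ℝ, SlowScale r ∧ ∃ ε₁ > (0:ℝ),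
    ∀ β ∈ midx n m, ∀ ε ∈ Set.Ioo (0:ℝ) ε₁, ∀ x ∈ K,
      ‖pd γ (a β ε) x‖ ≤ s ε * bprin m a ε x

/-- slow-scale growth in each derivative on compact sets -/
def SlowScaleReg {n : ℕ} (Ω : Set (Rn n)) (u : ℝ → Rn n → ℂ) : Prop :=
  (∀ ε ∈ Set.Ioc (0:ℝ) 1, ContDiffOn ℝ (⊤ : ℕ∞) (u ε) Ω) ∧
  ∀ K : Set (Rn n), IsCompact K → K ⊆ Ω → ∀ α : Fin n → ℕ,
    ∃ s : ℝ → ℝ, SlowScale s ∧ ∃ ε₀ > (0:ℝ), ∀ ε ∈ Set.Ioo (0:ℝ) ε₀, ∀ x ∈ K,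
      ‖pd α (u ε) x‖ ≤ s ε

/-- first-order symbol Σ_j a_j^ε(x) ξ_j + a_0^ε(x) -/
def P1sym {n : ℕ} (aj : Fin n → ℝ → Rn n → ℂ) (a0 : ℝ → Rn n → ℂ) (ε : ℝ) :
    Rn n → Rn n → ℂ :=
  fun x ξ => (∑ j, aj j ε x * ((ξ j : ℝ) : ℂ)) + a0 ε x

/-- first-order operator action Σ_j a_j^ε(x) D_j u + a_0^ε(x) u -/
def P1apply {n : ℕ} (aj : Fin n → ℝ → Rn n → ℂ) (a0 : ℝ → Rn n → ℂ) (ε : ℝ)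
    (u : Rn n → ℂ) : Rn n → ℂ :=
  fun x => (∑ j, aj j ε x * (-Complex.I * pd1 j u x)) + a0 ε x * u x


section Aux

variable {n : ℕ}

/-! ### Slow scale lemmas -/

lemma ss_const {c : ℝ} (hc : 0 < c) : SlowScale (fun _ => c) := by
  refine ⟨fun ε _ => hc, fun p hp => ?_⟩
  refine ⟨max (c ^ p) 1, lt_of_lt_of_le one_pos (le_max_right _ _), 1/2, by norm_num, ?_⟩
  intro ε hε
  rw [le_div_iff₀ hε.1]
  have h2 : ε ≤ 1 := by linarith [hε.2]
  have h3 : c ^ p ≤ max (c ^ p) 1 := le_max_left _ _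
  have h4 : (0:ℝ) < max (c ^ p) 1 := lt_of_lt_of_le one_pos (le_max_right _ _)
  nlinarith [Real.rpow_nonneg hc.le p]

lemma ss_mul {s t : ℝ → ℝ} (hs : SlowScale s) (ht : SlowScale t) :
    SlowScale (fun ε => s ε * t ε) := by
  refine ⟨fun ε hε => mul_pos (hs.1 ε hε) (ht.1 ε hε), fun p hp => ?_⟩
  obtain ⟨C1, hC1, ε1, hε1, h1⟩ := hs.2 (2*p) (by linarith)
  obtain ⟨C2, hC2, ε2, hε2, h2⟩ := ht.2 (2*p) (by linarith)
  refine ⟨Real.sqrt (C1 * C2) + 1, by positivity, min ε1 ε2,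
    ⟨lt_min hε1.1 hε2.1, lt_of_le_of_lt (min_le_left _ _) hε1.2⟩, ?_⟩
  intro ε hε
  have hε1' : ε ∈ Set.Ioo (0:ℝ) ε1 := ⟨hε.1, lt_of_lt_of_le hε.2 (min_le_left _ _)⟩
  have hε2' : ε ∈ Set.Ioo (0:ℝ) ε2 := ⟨hε.1, lt_of_lt_of_le hε.2 (min_le_right _ _)⟩
  have hIoc : ε ∈ Set.Ioc (0:ℝ) 1 := ⟨hε.1, le_of_lt (lt_trans hε1'.2 hε1.2)⟩
  have hsp := hs.1 ε hIoc
  have htp := ht.1 ε hIoc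
  have hb1 := h1 ε hε1'
  have hb2 := h2 ε hε2'
  set x := (s ε * t ε) ^ p with hxdef
  have hxnn : 0 ≤ x := Real.rpow_nonneg (by positivity) p
  have e1 : x ^ (2:ℕ) = ((s ε) ^ (2*p)) * ((t ε) ^ (2*p)) := by
    rw [hxdef, Real.mul_rpow hsp.le htp.le, two_mul, Real.rpow_add hsp,
      Real.rpow_add htp]
    ring
  have key : x ^ (2:ℕ) ≤ (C1 * C2) / (ε * ε) := by
    rw [e1, ← div_mul_div_comm]
    exact mul_le_mul hb1 hb2 (Real.rpow_nonneg htp.le _) (div_nonneg hC1.le hε.1.le)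
  have hxε2 : (x * ε) ^ (2:ℕ) ≤ C1 * C2 := by
    have h5 : x ^ (2:ℕ) * (ε * ε) ≤ (C1 * C2) / (ε * ε) * (ε * ε) :=
      mul_le_mul_of_nonneg_right key (mul_self_nonneg ε)
    rw [div_mul_cancel₀ _ (mul_pos hε.1 hε.1).ne'] at h5
    calc (x * ε) ^ (2:ℕ) = x ^ (2:ℕ) * (ε * ε) := by ring
      _ ≤ C1 * C2 := h5
  have hfin : x * ε ≤ Real.sqrt (C1 * C2) := by
    have h := Real.sqrt_le_sqrt hxε2
    rwa [Real.sqrt_sq (mul_nonneg hxnn hε.1.le)] at h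
  rw [le_div_iff₀ hε.1]
  linarith

lemma ss_max {s t : ℝ → ℝ} (hs : SlowScale s) (ht : SlowScale t) :
    SlowScale (fun ε => max (s ε) (t ε)) := by
  refine ⟨fun ε hε => lt_max_of_lt_left (hs.1 ε hε), fun p hp => ?_⟩
  obtain ⟨C1, hC1, ε1, hε1, h1⟩ := hs.2 p hp
  obtain ⟨C2, hC2, ε2, hε2, h2⟩ := ht.2 p hp
  refine ⟨C1 + C2, by positivity, min ε1 ε2,
    ⟨lt_min hε1.1 hε2.1, lt_of_le_of_lt (min_le_left _ _) hε1.2⟩, ?_⟩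
  intro ε hε
  have hε1' : ε ∈ Set.Ioo (0:ℝ) ε1 := ⟨hε.1, lt_of_lt_of_le hε.2 (min_le_left _ _)⟩
  have hε2' : ε ∈ Set.Ioo (0:ℝ) ε2 := ⟨hε.1, lt_of_lt_of_le hε.2 (min_le_right _ _)⟩
  show (max (s ε) (t ε)) ^ p ≤ (C1 + C2) / ε
  rcases max_choice (s ε) (t ε) with h | h <;> rw [h]
  · refine le_trans (h1 ε hε1') ?_
    gcongr
    · exact hε.1.le
    · linarith
  · refine le_trans (h2 ε hε2') ?_
    gcongr
    · exact hε.1.le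
    · linarith

/-- combine finitely many slow-scale dominated families into one -/
lemma ss_family {m : ℕ} (K : Set (Rn n)) (F : Fin m → ℝ → Rn n → ℂ)
    (hF : ∀ k, ∃ s : ℝ → ℝ, SlowScale s ∧ ∃ ε₀ > (0:ℝ),
      ∀ ε ∈ Set.Ioo (0:ℝ) ε₀, ∀ x ∈ K, ‖F k ε x‖ ≤ s ε) :
    ∃ s : ℝ → ℝ, SlowScale s ∧ ∃ ε₀ > (0:ℝ),
      ∀ ε ∈ Set.Ioo (0:ℝ) ε₀, ∀ x ∈ K, ∀ k, ‖F k ε x‖ ≤ s ε := by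
  induction m with
  | zero => exact ⟨fun _ => 1, ss_const one_pos, 1, one_pos, fun ε _ x _ k => k.elim0⟩
  | succ m ih =>
      obtain ⟨S, hS, ε₀, hε₀, hSb⟩ := ih (fun k => F k.castSucc) (fun k => hF k.castSucc)
      obtain ⟨s, hs, ε₁, hε₁, hsb⟩ := hF (Fin.last m)
      refine ⟨fun ε => max (S ε) (s ε), ss_max hS hs, min ε₀ ε₁, lt_min hε₀ hε₁, ?_⟩
      intro ε hε x hx k
      have hεa : ε ∈ Set.Ioo (0:ℝ) ε₀ := ⟨hε.1, lt_of_lt_of_le hε.2 (min_le_left _ _)⟩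
      have hεb : ε ∈ Set.Ioo (0:ℝ) ε₁ := ⟨hε.1, lt_of_lt_of_le hε.2 (min_le_right _ _)⟩
      induction k using Fin.lastCases with
      | last => exact le_trans (hsb ε hεb x hx) (le_max_right _ _)
      | cast k => exact le_trans (hSb ε hεa x hx k) (le_max_left _ _)

end Aux

/-! ### pd machinery -/

/-- a "good" operator on functions: preserves smoothness on `U`, is local on `U`,
and commutes with finite linear combinations on `U`. -/
def GoodOp (U : Set (Rn n)) (T : (Rn n → ℂ) → Rn n → ℂ) : Prop :=
  (∀ f, ContDiffOn ℝ (⊤ : ℕ∞) f U → ContDiffOn ℝ (⊤ : ℕ∞) (T f) U) ∧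
  (∀ f g, (∀ y ∈ U, f y = g y) → ∀ x ∈ U, T f x = T g x) ∧
  (∀ (m : ℕ) (c : Fin m → ℂ) (f : Fin m → Rn n → ℂ), (∀ k, ContDiffOn ℝ (⊤ : ℕ∞) (f k) U) →
    ∀ x ∈ U, T (fun y => ∑ k, c k * f k y) x = ∑ k, c k * T (f k) x)

lemma goodOp_id (U : Set (Rn n)) : GoodOp U id :=
  ⟨fun _ h => h, fun _ _ h x hx => h x hx, fun _ _ _ _ _ _ => rfl⟩

lemma goodOp_comp {U : Set (Rn n)} {T S : (Rn n → ℂ) → Rn n → ℂ}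
    (hT : GoodOp U T) (hS : GoodOp U S) : GoodOp U (T ∘ S) := by
  refine ⟨fun f hf => hT.1 _ (hS.1 f hf), fun f g h x hx => hT.2.1 _ _ (hS.2.1 f g h) x hx,
    fun m c f hf x hx => ?_⟩
  have h1 : ∀ y ∈ U, S (fun y => ∑ k, c k * f k y) y = (fun y => ∑ k, c k * S (f k) y) y :=
    fun y hy => hS.2.2 m c f hf y hy
  calc T (S fun y => ∑ k, c k * f k y) x
      = T (fun y => ∑ k, c k * S (f k) y) x := hT.2.1 _ _ h1 x hx
    _ = ∑ k, c k * T (S (f k)) x := hT.2.2 m c (fun k => S (f k)) (fun k => hS.1 _ (hf k)) x hx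

lemma goodOp_pd1 {U : Set (Rn n)} (hU : IsOpen U) (i : Fin n) : GoodOp U (pd1 i) := by
  refine ⟨?_, ?_, ?_⟩
  · intro f hf
    have h1 : ContDiffOn ℝ (⊤ : ℕ∞) (fderiv ℝ f) U := hf.fderiv_of_isOpen hU (by simp)
    exact h1.clm_apply contDiffOn_const
  · intro f g h x hx
    have hfg : f =ᶠ[nhds x] g :=
      Filter.eventuallyEq_of_mem (hU.mem_nhds hx) (fun y hy => h y hy)
    simp only [pd1, hfg.fderiv_eq]
  · intro m c f hf x hx
    have hdk : ∀ k, DifferentiableAt ℝ (f k) x := fun k =>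
      ((hf k).contDiffAt (hU.mem_nhds hx)).differentiableAt (by simp)
    have hdk' : ∀ k ∈ Finset.univ, DifferentiableAt ℝ (fun y => c k * f k y) x :=
      fun k _ => (hdk k).const_mul _
    simp only [pd1]
    rw [fderiv_fun_sum hdk']
    rw [ContinuousLinearMap.sum_apply]
    refine Finset.sum_congr rfl fun k _ => ?_
    rw [fderiv_const_mul (hdk k)]
    simp

lemma goodOp_iterate {U : Set (Rn n)} {T : (Rn n → ℂ) → Rn n → ℂ}
    (hT : GoodOp U T) : ∀ k : ℕ, GoodOp U (T^[k]) := by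
  intro k
  induction k with
  | zero => simpa using goodOp_id U
  | succ k ih => rw [Function.iterate_succ]; exact goodOp_comp ih hT

lemma goodOp_foldr {U : Set (Rn n)} (g : Fin n → (Rn n → ℂ) → Rn n → ℂ)
    (hg : ∀ i, GoodOp U (g i)) :
    ∀ L : List (Fin n), GoodOp U ((L.map g).foldr (· ∘ ·) id) := by
  intro L
  induction L with
  | nil => simpa using goodOp_id U
  | cons a L ih =>
      simp only [List.map_cons, List.foldr_cons]
      exact goodOp_comp (hg a) ih

lemma goodOp_pd {U : Set (Rn n)} (hU : IsOpen U) (α : Fin n → ℕ) : GoodOp U (pd α) :=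
  goodOp_foldr _ (fun i => goodOp_iterate (goodOp_pd1 hU i) (α i)) (List.finRange n)

lemma foldr_eq_id (g : Fin n → (Rn n → ℂ) → Rn n → ℂ) :
    ∀ L : List (Fin n), (∀ i ∈ L, g i = id) → (L.map g).foldr (· ∘ ·) id = id := by
  intro L
  induction L with
  | nil => simp
  | cons a L ih =>
      intro h
      simp only [List.map_cons, List.foldr_cons, h a List.mem_cons_self,
        ih (fun i hi => h i (List.mem_cons_of_mem a hi))]
      rfl

lemma pd_zero (f : Rn n → ℂ) : pd (fun _ => 0) f = f := by
  unfold pd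
  rw [foldr_eq_id _ _ (fun i _ => Function.iterate_zero (pd1 i))]
  rfl

lemma pd_single (j : Fin n) (f : Rn n → ℂ) :
    pd (fun i => if i = j then 1 else 0) f = pd1 j f := by
  have main : ∀ L : List (Fin n), L.Nodup → j ∈ L →
      (L.map fun i => (pd1 i)^[if i = j then 1 else 0]).foldr (· ∘ ·) id = pd1 j := by
    intro L
    induction L with
    | nil => intro _ h; simp at h
    | cons a L ih =>
        intro hnd hmem
        simp only [List.map_cons, List.foldr_cons]
        by_cases ha : a = j
        · subst ha
          have hnot : ∀ i ∈ L, (pd1 i)^[if i = a then 1 else 0] = id := by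
            intro i hi
            have : i ≠ a := fun h => (List.nodup_cons.mp hnd).1 (h ▸ hi)
            simp [this]
          rw [foldr_eq_id _ _ hnot]
          simp
        · have hj : j ∈ L := by
            rcases List.mem_cons.mp hmem with h | h
            · exact absurd h.symm ha
            · exact h
          rw [ih (List.nodup_cons.mp hnd).2 hj]
          simp [ha]
  unfold pd
  exact congrFun (main (List.finRange n) (List.nodup_finRange n) (List.mem_finRange j)) f

lemma mdeg_zero : mdeg (fun _ : Fin n => 0) = 0 := by simp [mdeg]

lemma mdeg_single (j : Fin n) : mdeg (fun i => if i = j then 1 else 0) = 1 := by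
  simp [mdeg, Finset.sum_ite_eq' Finset.univ j]

lemma mdeg_le_one {β : Fin n → ℕ} (h : mdeg β ≤ 1) :
    β = (fun _ => 0) ∨ ∃ j, β = fun i => if i = j then 1 else 0 := by
  by_cases h0 : β = fun _ => 0
  · exact Or.inl h0
  · right
    have : ∃ j, β j ≠ 0 := by
      by_contra hc
      push_neg at hc
      exact h0 (funext hc)
    obtain ⟨j, hj⟩ := this
    have h1 : 1 ≤ β j := Nat.one_le_iff_ne_zero.mpr hj
    have hsum : β j ≤ mdeg β :=
      Finset.single_le_sum (fun i _ => Nat.zero_le (β i)) (Finset.mem_univ j)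
    have hβj : β j = 1 := le_antisymm (hsum.trans h) h1
    refine ⟨j, funext fun i => ?_⟩
    by_cases hij : i = j
    · subst hij; simp [hβj]
    · have hsub : ({i, j} : Finset (Fin n)) ⊆ Finset.univ := Finset.subset_univ _
      have hpair : β i + β j ≤ mdeg β := by
        have := Finset.sum_le_sum_of_subset (f := β) hsub
        rwa [Finset.sum_pair hij] at this
      simp only [hij, if_false]
      omega

/-! ### concrete derivative computations -/

lemma pd1_affine {n : ℕ} (c : Fin n → ℂ) (c0 : ℂ) (j : Fin n) (ξ : Rn n) :
    pd1 j (fun η => (∑ k, c k * ((η k : ℝ) : ℂ)) + c0) ξ = c j := by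
  classical
  set L : Rn n →L[ℝ] ℂ :=
    ∑ k, c k • ((Complex.ofRealCLM).comp (EuclideanSpace.proj k)) with hLdef
  have hL : ∀ η : Rn n, L η = ∑ k, c k * ((η k : ℝ) : ℂ) := by
    intro η
    rw [hLdef, ContinuousLinearMap.sum_apply]
    refine Finset.sum_congr rfl fun k _ => ?_
    simp [EuclideanSpace.proj, PiLp.proj_apply, smul_eq_mul]
  have hfun : (fun η : Rn n => L η + c0) = fun η => (∑ k, c k * ((η k : ℝ) : ℂ)) + c0 :=
    funext fun η => by rw [hL]
  have hd : HasFDerivAt (fun η : Rn n => (∑ k, c k * ((η k : ℝ) : ℂ)) + c0) L ξ := by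
    rw [← hfun]
    exact (L.hasFDerivAt).add_const c0
  rw [pd1, hd.fderiv, hL]
  simp only [EuclideanSpace.single_apply]
  rw [Finset.sum_congr rfl (fun k _ => by
    rw [show (((if k = j then (1:ℝ) else 0) : ℝ) : ℂ) = if k = j then (1:ℂ) else 0 by
      split <;> simp])]
  simp

lemma coord_le_norm {n : ℕ} (ξ : Rn n) (j : Fin n) : |ξ j| ≤ ‖ξ‖ := by
  rw [EuclideanSpace.norm_eq]
  have h1 : |ξ j| = Real.sqrt (‖ξ j‖ ^ 2) := by
    rw [Real.sqrt_sq_eq_abs, Real.norm_eq_abs, abs_abs]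
  rw [h1]
  apply Real.sqrt_le_sqrt
  exact Finset.single_le_sum (fun i _ => sq_nonneg ‖ξ i‖) (Finset.mem_univ j)

/-- decomposition of ∂^α_x of the first-order symbol -/
lemma pd_P1sym {n : ℕ} {U : Set (Rn n)} (hU : IsOpen U)
    (aj : Fin n → ℝ → Rn n → ℂ) (a0 : ℝ → Rn n → ℂ) (ε : ℝ)
    (hsm : ∀ j, ContDiffOn ℝ (⊤ : ℕ∞) (aj j ε) U) (hsm0 : ContDiffOn ℝ (⊤ : ℕ∞) (a0 ε) U)
    (α : Fin n → ℕ) (ξ : Rn n) {x : Rn n} (hx : x ∈ U) :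
    pd α (fun y => P1sym aj a0 ε y ξ) x
      = (∑ j, ((ξ j : ℝ) : ℂ) * pd α (aj j ε) x) + pd α (a0 ε) x := by
  classical
  set c : Fin (n+1) → ℂ := Fin.snoc (fun j => ((ξ j : ℝ) : ℂ)) 1 with hc
  set f : Fin (n+1) → Rn n → ℂ := Fin.snoc (fun j => aj j ε) (a0 ε) with hf
  have hfsm : ∀ k, ContDiffOn ℝ (⊤ : ℕ∞) (f k) U := by
    intro k
    induction k using Fin.lastCases with
    | last => simpa [hf] using hsm0
    | cast k => simpa [hf] using hsm k
  have hrepr : (fun y => P1sym aj a0 ε y ξ) = fun y => ∑ k, c k * f k y := by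
    funext y
    rw [Fin.sum_univ_castSucc]
    simp only [hc, hf, Fin.snoc_castSucc, Fin.snoc_last, one_mul, P1sym]
    congr 1
    exact Finset.sum_congr rfl fun j _ => mul_comm _ _
  rw [hrepr, (goodOp_pd hU α).2.2 (n+1) c f hfsm x hx, Fin.sum_univ_castSucc]
  simp only [hc, hf, Fin.snoc_castSucc, Fin.snoc_last, one_mul]

/-- ∂^β_ξ of the symbol in ξ, for β = 0 -/
lemma pdxi_zero {n : ℕ} (P : Rn n → Rn n → ℂ) :
    pdxi (fun _ => 0) P = P := by
  funext x ξ
  simp [pdxi, pd_zero]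

/-- ∂^β_ξ of the first-order symbol for β = eⱼ -/
lemma pdxi_single_P1sym {n : ℕ} (aj : Fin n → ℝ → Rn n → ℂ) (a0 : ℝ → Rn n → ℂ)
    (ε : ℝ) (j : Fin n) :
    pdxi (fun i => if i = j then 1 else 0) (P1sym aj a0 ε) = fun x _ => aj j ε x := by
  funext x ξ
  rw [pdxi, pd_single]
  exact pd1_affine (fun k => aj k ε x) (a0 ε x) j ξ


/-- first-order operators with slow scale coefficients satisfy
    (mh_1) with m₀ = 1 and (mh_2) with δ = 0, ρ = 1 on K × Γ. -/
theorem stmt9 {n : ℕ} (U : Set (Rn n)) (hU : IsOpen U)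
    (aj : Fin n → ℝ → Rn n → ℂ) (a0 : ℝ → Rn n → ℂ)
    (haj : ∀ j, SlowScaleReg U (aj j)) (ha0 : SlowScaleReg U a0)
    (Γ : Set (Rn n)) (hΓo : IsOpen Γ) (hΓc : IsCone Γ) (hΓ0 : (0 : Rn n) ∉ Γ)
    (hprin : ∀ K : Set (Rn n), IsCompact K → K ⊆ U →
      ∃ s : ℝ → ℝ, SlowScale s ∧ ∃ r : ℝ → ℝ, SlowScale r ∧ ∃ ε₀ > (0:ℝ),
        ∀ ε ∈ Set.Ioo (0:ℝ) ε₀, ∀ x ∈ K, ∀ ξ ∈ Γ, r ε ≤ ‖ξ‖ →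
          (1 + ‖ξ‖) / s ε ≤ ‖∑ j, aj j ε x * ((ξ j : ℝ) : ℂ)‖) :
    ∀ K : Set (Rn n), IsCompact K → K ⊆ U →
      MH1 (fun ε => P1sym aj a0 ε) K Γ 1 ∧
      MH2 1 (fun ε => P1sym aj a0 ε) K Γ 0 1 := by
  intro K hK hKU
  obtain ⟨s₀, hs₀, r₀, hr₀, ε₀, hε₀, hlow⟩ := hprin K hK hKU
  obtain ⟨sa0, hsa0, εa, hεa, ha0b⟩ := ha0.2 K hK hKU (fun _ => 0)
  have ha0b' : ∀ ε ∈ Set.Ioo (0:ℝ) εa, ∀ x ∈ K, ‖a0 ε x‖ ≤ sa0 ε := by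
    intro ε hε x hx
    have := ha0b ε hε x hx
    rwa [pd_zero] at this
  obtain ⟨C, hC, ε', hε', hsC⟩ := hs₀.2 1 one_pos
  have hsC' : ∀ ε ∈ Set.Ioo (0:ℝ) ε', s₀ ε ≤ C / ε := by
    intro ε hε
    have := hsC ε hε
    rwa [Real.rpow_one] at this
  set r' : ℝ → ℝ := fun ε => max (r₀ ε) (2 * s₀ ε * sa0 ε) with hr'def
  have hr' : SlowScale r' := ss_max hr₀ (ss_mul (ss_mul (ss_const two_pos) hs₀) hsa0)
  set ε₁ : ℝ := min (min ε₀ εa) (min ε' (min 1 (1/(2*C)))) with hε₁def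
  have hε₁pos : 0 < ε₁ :=
    lt_min (lt_min hε₀ hεa) (lt_min hε'.1 (lt_min one_pos (by positivity)))
  have hε₁le1 : ε₁ ≤ 1 :=
    le_trans (min_le_right _ _) (le_trans (min_le_right _ _) (min_le_left _ _))
  have hε₁le0 : ε₁ ≤ ε₀ := le_trans (min_le_left _ _) (min_le_left _ _)
  have hε₁lea : ε₁ ≤ εa := le_trans (min_le_left _ _) (min_le_right _ _)
  have hε₁le' : ε₁ ≤ ε' := le_trans (min_le_right _ _) (min_le_left _ _)
  have hε₁leC : ε₁ ≤ 1/(2*C) :=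
    le_trans (min_le_right _ _) (le_trans (min_le_right _ _) (min_le_right _ _))
  have key : ∀ ε ∈ Set.Ioo (0:ℝ) ε₁, ∀ x ∈ K, ∀ ξ ∈ Γ, r' ε ≤ ‖ξ‖ →
      (1 + ‖ξ‖) ≤ 2 * s₀ ε * ‖P1sym aj a0 ε x ξ‖ := by
    intro ε hε x hx ξ hξ hrξ
    have hεIoc : ε ∈ Set.Ioc (0:ℝ) 1 := ⟨hε.1, le_of_lt (lt_of_lt_of_le hε.2 hε₁le1)⟩
    have hs₀p := hs₀.1 ε hεIoc
    have hsa0p := hsa0.1 ε hεIoc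
    have hA := hlow ε ⟨hε.1, lt_of_lt_of_le hε.2 hε₁le0⟩ x hx ξ hξ
      (le_trans (le_max_left _ _) hrξ)
    have ha0' := ha0b' ε ⟨hε.1, lt_of_lt_of_le hε.2 hε₁lea⟩ x hx
    have hξ2 : 2 * s₀ ε * sa0 ε ≤ ‖ξ‖ := le_trans (le_max_right _ _) hrξ
    set A := ∑ j, aj j ε x * ((ξ j : ℝ) : ℂ) with hAdef
    have htri : ‖A‖ ≤ ‖P1sym aj a0 ε x ξ‖ + ‖a0 ε x‖ := by
      have hA3 : A = P1sym aj a0 ε x ξ - a0 ε x := by simp [P1sym, hAdef]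
      rw [hA3]
      exact norm_sub_le _ _
    have hA2 : 1 + ‖ξ‖ ≤ s₀ ε * ‖A‖ := by
      rw [div_le_iff₀ hs₀p] at hA
      linarith
    have hξn : (0:ℝ) ≤ ‖ξ‖ := norm_nonneg ξ
    nlinarith [mul_le_mul_of_nonneg_left htri hs₀p.le,
      mul_le_mul_of_nonneg_left ha0' hs₀p.le, norm_nonneg (P1sym aj a0 ε x ξ)]
  constructor
  · -- MH1
    refine ⟨2, two_pos, r', hr', ε₁, hε₁pos, ?_⟩
    intro ε hε x hx ξ hξ hrξ
    have hkey := key ε hε x hx ξ hξ hrξ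
    have hεIoc : ε ∈ Set.Ioc (0:ℝ) 1 := ⟨hε.1, le_of_lt (lt_of_lt_of_le hε.2 hε₁le1)⟩
    have hs₀p := hs₀.1 ε hεIoc
    have hsC'' : s₀ ε ≤ C / ε := hsC' ε ⟨hε.1, lt_of_lt_of_le hε.2 hε₁le'⟩
    have h2Cε : 2 * C * ε ≤ 1 := by
      have hle : ε ≤ 1/(2*C) := le_of_lt (lt_of_lt_of_le hε.2 hε₁leC)
      rw [le_div_iff₀ (by positivity)] at hle
      linarith
    have hεs : s₀ ε * ε ≤ C := by
      rw [le_div_iff₀ hε.1] at hsC''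
      exact hsC''
    beta_reduce
    rw [Real.rpow_one, show (2:ℝ) = ((2:ℕ):ℝ) by norm_num, Real.rpow_natCast]
    have hq : ε ^ (2:ℕ) * (2 * s₀ ε) ≤ 1 := by nlinarith [hε.1, hs₀p]
    nlinarith [mul_le_mul_of_nonneg_left hkey (pow_nonneg hε.1.le 2),
      mul_le_mul_of_nonneg_right hq (norm_nonneg (P1sym aj a0 ε x ξ)),
      norm_nonneg (P1sym aj a0 ε x ξ)]
  · -- MH2
    intro α
    classical
    set F : Fin (n+1) → ℝ → Rn n → ℂ :=
      Fin.snoc (fun j => fun ε x => pd α (aj j ε) x) (fun ε x => pd α (a0 ε) x) with hFdef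
    have hF : ∀ k, ∃ s : ℝ → ℝ, SlowScale s ∧ ∃ ε₀ > (0:ℝ),
        ∀ ε ∈ Set.Ioo (0:ℝ) ε₀, ∀ x ∈ K, ‖F k ε x‖ ≤ s ε := by
      intro k
      induction k using Fin.lastCases with
      | last => simpa [hFdef] using ha0.2 K hK hKU α
      | cast k => simpa [hFdef] using (haj k).2 K hK hKU α
    obtain ⟨sα, hsα, εα, hεα, hsαb⟩ := ss_family K F hF
    have hbj : ∀ ε ∈ Set.Ioo (0:ℝ) εα, ∀ x ∈ K,
        (∀ j, ‖pd α (aj j ε) x‖ ≤ sα ε) ∧ ‖pd α (a0 ε) x‖ ≤ sα ε := by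
      intro ε hε x hx
      constructor
      · intro j
        have := hsαb ε hε x hx (Fin.castSucc j)
        simpa [hFdef] using this
      · have := hsαb ε hε x hx (Fin.last n)
        simpa [hFdef] using this
    refine ⟨fun ε => 2 * ((n:ℝ)+1) * (sα ε * s₀ ε), ?_, r', hr', min ε₁ εα,
      lt_min hε₁pos hεα, ?_⟩
    · exact ss_mul (ss_const (by positivity : (0:ℝ) < 2 * ((n:ℝ)+1))) (ss_mul hsα hs₀)
    intro β hβ ε hε x hx ξ hξ hrξ
    have hεa' : ε ∈ Set.Ioo (0:ℝ) ε₁ := ⟨hε.1, lt_of_lt_of_le hε.2 (min_le_left _ _)⟩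
    have hεα' : ε ∈ Set.Ioo (0:ℝ) εα := ⟨hε.1, lt_of_lt_of_le hε.2 (min_le_right _ _)⟩
    have hεIoc : ε ∈ Set.Ioc (0:ℝ) 1 := ⟨hε.1, le_of_lt (lt_of_lt_of_le hεa'.2 hε₁le1)⟩
    have hkey := key ε hεa' x hx ξ hξ hrξ
    have hcoef := hbj ε hεα' x hx
    have hs₀p := hs₀.1 ε hεIoc
    have hsαp := hsα.1 ε hεIoc
    have hPn : (0:ℝ) ≤ ‖P1sym aj a0 ε x ξ‖ := norm_nonneg _
    have hξn : (0:ℝ) ≤ ‖ξ‖ := norm_nonneg ξ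
    have h1ξ : (0:ℝ) < 1 + ‖ξ‖ := by positivity
    have hsmj : ∀ j, ContDiffOn ℝ (⊤ : ℕ∞) (aj j ε) U := fun j => (haj j).1 ε hεIoc
    have hsm0 : ContDiffOn ℝ (⊤ : ℕ∞) (a0 ε) U := ha0.1 ε hεIoc
    have hnn : (0:ℝ) ≤ (n:ℝ) := Nat.cast_nonneg n
    rcases mdeg_le_one hβ with h0 | ⟨j, hj⟩
    · subst h0
      beta_reduce
      rw [pdxi_zero]
      have hexp : (0 * ((mdeg α : ℕ):ℝ) - 1 * ((mdeg (fun _ : Fin n => 0) : ℕ):ℝ)) = 0 := by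
        rw [mdeg_zero]; norm_num
      rw [hexp, Real.rpow_zero, mul_one]
      have hpdx : pdx α (P1sym aj a0 ε) x ξ
          = (∑ j, ((ξ j : ℝ) : ℂ) * pd α (aj j ε) x) + pd α (a0 ε) x := by
        rw [pdx]
        exact pd_P1sym hU aj a0 ε hsmj hsm0 α ξ (hKU hx)
      rw [hpdx]
      have hterm : ∀ j, ‖((ξ j : ℝ) : ℂ) * pd α (aj j ε) x‖ ≤ ‖ξ‖ * sα ε := by
        intro j
        rw [norm_mul]
        apply mul_le_mul ?_ (hcoef.1 j) (norm_nonneg _) hξn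
        simpa using coord_le_norm ξ j
      calc ‖(∑ j, ((ξ j : ℝ) : ℂ) * pd α (aj j ε) x) + pd α (a0 ε) x‖
          ≤ (∑ _j : Fin n, ‖ξ‖ * sα ε) + sα ε := by
            refine le_trans (norm_add_le _ _) (add_le_add ?_ hcoef.2)
            exact le_trans (norm_sum_le _ _) (Finset.sum_le_sum fun j _ => hterm j)
        _ = sα ε * ((n:ℝ) * ‖ξ‖ + 1) := by
            rw [Finset.sum_const, Finset.card_univ, Fintype.card_fin]
            ring
        _ ≤ 2 * ((n:ℝ)+1) * (sα ε * s₀ ε) * ‖P1sym aj a0 ε x ξ‖ := by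
            nlinarith [mul_le_mul_of_nonneg_left hkey
              (mul_nonneg (by positivity : (0:ℝ) ≤ (n:ℝ)+1) hsαp.le),
              mul_nonneg hsαp.le hnn, mul_nonneg hsαp.le hξn,
              mul_nonneg (mul_nonneg hsαp.le hnn) hξn]
    · subst hj
      beta_reduce
      rw [pdxi_single_P1sym]
      have hexp : (0 * ((mdeg α : ℕ):ℝ)
          - 1 * ((mdeg (fun i : Fin n => if i = j then 1 else 0) : ℕ):ℝ)) = -1 := by
        rw [mdeg_single]; norm_num
      rw [hexp, Real.rpow_neg_one]
      have hpdx : pdx α (fun (x' : Rn n) (_ : Rn n) => aj j ε x') x ξ = pd α (aj j ε) x := by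
        rw [pdx]
      rw [hpdx]
      rw [← div_eq_mul_inv, le_div_iff₀ h1ξ]
      nlinarith [mul_le_mul_of_nonneg_right (hcoef.1 j) h1ξ.le,
        mul_le_mul_of_nonneg_left hkey hsαp.le,
        mul_nonneg hnn (mul_nonneg (mul_nonneg hsαp.le hs₀p.le) hPn)]

end
end

section
/- Let P_ε(x,D) = Σ_{|σ|≤m} a_σ^ε(x) D^σ be a family of partial differential operators of order m on an open set U ⊆ ℝⁿ whose symbols satisfy condition (mh_2) with parameters 0 ≤ δ < ρ ≤ 1 on K×Γ for every compact K ⊂ U, where Γ ⊆ ℝⁿ∖{0} is an open cone. Let ᵗP_ε denote the transposed operator, whose symbol satisfies ᵗP_ε(x,η) = Σ_{|σ|≤m} ((−1)^{|σ|}/σ!) (∂_ξ^σ ∂_x^σ P_ε)(x,−η). Then for every compact K ⊂ U and all multi-indices α, β, γ there exist slow-scale nets (S_ε), (p_ε) and μ > 0 such that |∂_x^α ∂_ξ^{γ+β}(ᵗP_ε(x,−ξ))| ≤ S_ε |P_ε(x,ξ)| (1+|ξ|)^{−ρ|γ+β|+δ|α|} for all (x,ξ) ∈ K×Γ with |ξ|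 ≥ p_ε and 0 < ε < μ. -/
open scoped BigOperators Classical
noncomputable section

set_option maxHeartbeats 1000000

section Aux
variable {n : ℕ} {U : Set (Rn n)}

lemma pd1_congr (hU : IsOpen U) {f g : Rn n → ℂ} (h : Set.EqOn f g U) (i : Fin n) :
    Set.EqOn (pd1 i f) (pd1 i g) U := by
  intro x hx
  have : f =ᶠ[nhds x] g := Filter.eventuallyEq_of_mem (hU.mem_nhds hx) h
  simp only [pd1, this.fderiv_eq]

lemma pd1_smooth (hU : IsOpen U) {f : Rn n → ℂ} (hf : ContDiffOn ℝ (⊤ : ℕ∞) f U) (i : Fin n) :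
    ContDiffOn ℝ (⊤ : ℕ∞) (pd1 i f) U := by
  have h1 : ContDiffOn ℝ (⊤ : ℕ∞) (fderiv ℝ f) U := hf.fderiv_of_isOpen hU (by simp)
  exact (ContinuousLinearMap.apply ℝ ℂ (EuclideanSpace.single i 1)).contDiff.comp_contDiffOn h1

lemma pd1_add (hU : IsOpen U) {f g : Rn n → ℂ} (hf : ContDiffOn ℝ (⊤ : ℕ∞) f U)
    (hg : ContDiffOn ℝ (⊤ : ℕ∞) g U) (i : Fin n) :
    Set.EqOn (pd1 i (fun x => f x + g x)) (fun x => pd1 i f x + pd1 i g x) U := by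
  intro x hx
  have hfd : DifferentiableAt ℝ f x :=
    (hf.contDiffAt (hU.mem_nhds hx)).differentiableAt (by simp)
  have hgd : DifferentiableAt ℝ g x :=
    (hg.contDiffAt (hU.mem_nhds hx)).differentiableAt (by simp)
  simp only [pd1]
  rw [show (fun x => f x + g x) = f + g from rfl, fderiv_add hfd hgd]
  rfl

lemma pd1_const_mul (hU : IsOpen U) {f : Rn n → ℂ} (hf : ContDiffOn ℝ (⊤ : ℕ∞) f U) (c : ℂ) (i : Fin n) :
    Set.EqOn (pd1 i (fun x => c * f x)) (fun x => c * pd1 i f x) U := by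
  intro x hx
  have hfd : DifferentiableAt ℝ f x :=
    (hf.contDiffAt (hU.mem_nhds hx)).differentiableAt (by simp)
  simp [pd1, fderiv_const_mul hfd]

lemma pd1_comm (hU : IsOpen U) {f : Rn n → ℂ} (hf : ContDiffOn ℝ (⊤ : ℕ∞) f U) (i j : Fin n) :
    Set.EqOn (pd1 i (pd1 j f)) (pd1 j (pd1 i f)) U := by
  intro x hx
  have hca : ContDiffAt ℝ (⊤ : ℕ∞) f x := hf.contDiffAt (hU.mem_nhds hx)
  have hsymm : IsSymmSndFDerivAt ℝ f x := hca.isSymmSndFDerivAt (by rw [minSmoothness_of_isRCLikeNormedField]; exact WithTop.coe_le_coe.2 (le_top : (2:ℕ∞) ≤ ⊤))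
  have hdf : ContDiffOn ℝ (⊤ : ℕ∞) (fderiv ℝ f) U := hf.fderiv_of_isOpen hU (by simp)
  have hdfd : DifferentiableAt ℝ (fderiv ℝ f) x :=
    (hdf.contDiffAt (hU.mem_nhds hx)).differentiableAt (by simp)
  have key : ∀ v w : Rn n, fderiv ℝ (fun y => fderiv ℝ f y w) x v
      = fderiv ℝ (fderiv ℝ f) x v w := by
    intro v w
    have hcomp : (fun y => fderiv ℝ f y w)
        = (ContinuousLinearMap.apply ℝ ℂ w) ∘ (fderiv ℝ f) := rfl
    rw [hcomp, fderiv_comp x (ContinuousLinearMap.apply ℝ ℂ w).differentiableAt hdfd]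
    simp
  show fderiv ℝ (fun y => fderiv ℝ f y _) x _ = fderiv ℝ (fun y => fderiv ℝ f y _) x _
  rw [key, key]
  exact hsymm _ _


/-- iterated first-order derivatives along a list of directions -/
def pdL {n : ℕ} (L : List (Fin n)) (f : Rn n → ℂ) : Rn n → ℂ :=
  L.foldr (fun i g => pd1 i g) f

@[simp] lemma pdL_nil (f : Rn n → ℂ) : pdL ([] : List (Fin n)) f = f := rfl
@[simp] lemma pdL_cons (i : Fin n) (L : List (Fin n)) (f : Rn n → ℂ) :
    pdL (i :: L) f = pd1 i (pdL L f) := rfl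

lemma pdL_append (L M : List (Fin n)) (f : Rn n → ℂ) :
    pdL (L ++ M) f = pdL L (pdL M f) := by
  induction L with
  | nil => rfl
  | cons i L ih => simp [ih]

lemma pdL_replicate (k : ℕ) (i : Fin n) (f : Rn n → ℂ) :
    pdL (List.replicate k i) f = (pd1 i)^[k] f := by
  induction k with
  | zero => rfl
  | succ k ih => simp [List.replicate_succ, ih, Function.iterate_succ_apply']

/-- the list of a multi-index -/
def mlist {n : ℕ} (α : Fin n → ℕ) : List (Fin n) :=
  (List.finRange n).flatMap fun i => List.replicate (α i) i

lemma pd_eq_pdL (α : Fin n → ℕ) (f : Rn n → ℂ) : pd α f = pdL (mlist α) f := by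
  unfold pd mlist
  induction (List.finRange n) with
  | nil => rfl
  | cons i L ih => simp [pdL_append, pdL_replicate, ih]

lemma count_mlist (α : Fin n → ℕ) (j : Fin n) : (mlist α).count j = α j := by
  unfold mlist
  have h : ∀ L : List (Fin n), L.Nodup →
      (L.flatMap fun i => List.replicate (α i) i).count j = if j ∈ L then α j else 0 := by
    intro L hL
    induction L with
    | nil => simp
    | cons i L ih =>
      simp only [List.flatMap_cons, List.count_append, List.count_replicate]
      rcases List.nodup_cons.1 hL with ⟨hi, hL'⟩
      rw [ih hL']
      by_cases hji : j = i
      · subst hji; simp [hi]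
      · simp [hji, Ne.symm hji]
  rw [h _ (List.nodup_finRange n)]
  simp [List.mem_finRange]

lemma mlist_add_perm (α β : Fin n → ℕ) :
    (mlist (fun i => α i + β i)).Perm (mlist α ++ mlist β) := by
  rw [List.perm_iff_count]
  intro j
  simp [List.count_append, count_mlist]


lemma pdL_smooth (hU : IsOpen U) {f : Rn n → ℂ} (hf : ContDiffOn ℝ (⊤ : ℕ∞) f U)
    (L : List (Fin n)) : ContDiffOn ℝ (⊤ : ℕ∞) (pdL L f) U := by
  induction L with
  | nil => exact hf
  | cons i L ih => rw [pdL_cons]; exact pd1_smooth hU ih i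

lemma pdL_congr (hU : IsOpen U) {f g : Rn n → ℂ} (h : Set.EqOn f g U)
    (L : List (Fin n)) : Set.EqOn (pdL L f) (pdL L g) U := by
  induction L with
  | nil => exact h
  | cons i L ih => rw [pdL_cons, pdL_cons]; exact pd1_congr hU ih i

lemma pdL_perm (hU : IsOpen U) {f : Rn n → ℂ} (hf : ContDiffOn ℝ (⊤ : ℕ∞) f U)
    {L L' : List (Fin n)} (hp : L.Perm L') :
    Set.EqOn (pdL L f) (pdL L' f) U := by
  induction hp with
  | nil => exact fun x _ => rfl
  | cons i _ ih => rw [pdL_cons, pdL_cons]; exact pd1_congr hU ih i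
  | swap i j L =>
      rw [pdL_cons, pdL_cons, pdL_cons, pdL_cons]
      exact pd1_comm hU (pdL_smooth hU hf L) j i
  | trans _ _ ih1 ih2 => exact ih1.trans (fun x hx => ih2 hx)

lemma pdL_add (hU : IsOpen U) {f g : Rn n → ℂ} (hf : ContDiffOn ℝ (⊤ : ℕ∞) f U)
    (hg : ContDiffOn ℝ (⊤ : ℕ∞) g U) (L : List (Fin n)) :
    Set.EqOn (pdL L (fun x => f x + g x)) (fun x => pdL L f x + pdL L g x) U := by
  induction L with
  | nil => exact fun x _ => rfl
  | cons i L ih =>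
      rw [pdL_cons]
      intro x hx
      have h1 := pd1_congr hU ih i hx
      rw [h1]
      have h2 := pd1_add hU (pdL_smooth hU hf L) (pdL_smooth hU hg L) i hx
      simpa using h2

lemma pdL_const_mul (hU : IsOpen U) {f : Rn n → ℂ} (hf : ContDiffOn ℝ (⊤ : ℕ∞) f U)
    (c : ℂ) (L : List (Fin n)) :
    Set.EqOn (pdL L (fun x => c * f x)) (fun x => c * pdL L f x) U := by
  induction L with
  | nil => exact fun x _ => rfl
  | cons i L ih =>
      rw [pdL_cons]
      intro x hx
      rw [pd1_congr hU ih i hx]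
      simpa using pd1_const_mul hU (pdL_smooth hU hf L) c i hx

lemma pd_smooth (hU : IsOpen U) {f : Rn n → ℂ} (hf : ContDiffOn ℝ (⊤ : ℕ∞) f U)
    (α : Fin n → ℕ) : ContDiffOn ℝ (⊤ : ℕ∞) (pd α f) U := by
  rw [pd_eq_pdL]; exact pdL_smooth hU hf _

lemma pd_congr (hU : IsOpen U) {f g : Rn n → ℂ} (h : Set.EqOn f g U)
    (α : Fin n → ℕ) : Set.EqOn (pd α f) (pd α g) U := by
  rw [pd_eq_pdL, pd_eq_pdL]; exact pdL_congr hU h _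

lemma pd_index_add (hU : IsOpen U) {f : Rn n → ℂ} (hf : ContDiffOn ℝ (⊤ : ℕ∞) f U)
    (α β : Fin n → ℕ) :
    Set.EqOn (pd (fun i => α i + β i) f) (pd α (pd β f)) U := by
  rw [pd_eq_pdL, pd_eq_pdL, pd_eq_pdL]
  intro x hx
  rw [pdL_perm hU hf (mlist_add_perm α β) hx, pdL_append]

lemma pd_const_mul (hU : IsOpen U) {f : Rn n → ℂ} (hf : ContDiffOn ℝ (⊤ : ℕ∞) f U)
    (c : ℂ) (α : Fin n → ℕ) :
    Set.EqOn (pd α (fun x => c * f x)) (fun x => c * pd α f x) U := by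
  rw [pd_eq_pdL, pd_eq_pdL]; exact pdL_const_mul hU hf c _

lemma pd_zero_s13 (hU : IsOpen U) (α : Fin n → ℕ) :
    Set.EqOn (pd α (fun _ => (0:ℂ))) (fun _ => (0:ℂ)) U := by
  intro x hx
  have h0 : (fun _ : Rn n => (0:ℂ)) = (fun x : Rn n => (0:ℂ) * (fun _ : Rn n => (0:ℂ)) x) := by
    funext y; ring
  have h2 := pd_const_mul hU (contDiffOn_const (c := (0:ℂ))) 0 α hx
  calc pd α (fun _ : Rn n => (0:ℂ)) x
      = pd α (fun x : Rn n => (0:ℂ) * (fun _ : Rn n => (0:ℂ)) x) x := by rw [← h0]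
    _ = (0:ℂ) * pd α (fun _ : Rn n => (0:ℂ)) x := h2
    _ = 0 := by ring

lemma pd_finset_sum {ι : Type*} (hU : IsOpen U) (s : Finset ι) (f : ι → Rn n → ℂ)
    (hf : ∀ i ∈ s, ContDiffOn ℝ (⊤ : ℕ∞) (f i) U) (α : Fin n → ℕ) :
    Set.EqOn (pd α (fun x => ∑ i ∈ s, f i x)) (fun x => ∑ i ∈ s, pd α (f i) x) U := by
  classical
  induction s using Finset.induction with
  | empty => simpa using pd_zero_s13 hU α
  | insert a s hnotmem ih =>
      intro x hx
      have hfa : ContDiffOn ℝ (⊤ : ℕ∞) (f a) U := hf a (Finset.mem_insert_self a s)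
      have hfs : ∀ i ∈ s, ContDiffOn ℝ (⊤ : ℕ∞) (f i) U :=
        fun i hi => hf i (Finset.mem_insert_of_mem hi)
      have hsum : ContDiffOn ℝ (⊤ : ℕ∞) (fun x => ∑ i ∈ s, f i x) U := by
        apply ContDiffOn.sum (fun i hi => hfs i hi)
      have h1 : Set.EqOn (pd α (fun x => ∑ i ∈ insert a s, f i x))
          (pd α (fun x => f a x + ∑ i ∈ s, f i x)) U := by
        apply pd_congr hU
        intro y _
        simp [Finset.sum_insert hnotmem]
      rw [h1 hx]
      rw [pd_eq_pdL, pdL_add hU hfa hsum _ hx, ← pd_eq_pdL, ← pd_eq_pdL]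
      simp only [Finset.sum_insert hnotmem]
      rw [ih hfs hx]

lemma contDiff_coord (j : Fin n) (k : ℕ) :
    ContDiff ℝ (⊤ : ℕ∞) (fun ξ : Rn n => ((ξ j : ℝ) : ℂ) ^ k) := by
  have h : ContDiff ℝ (⊤ : ℕ∞) (fun ξ : Rn n => ((ξ j : ℝ) : ℂ)) :=
    by have := (Complex.ofRealCLM.contDiff (n := (⊤ : ℕ∞))).comp ((EuclideanSpace.proj j : Rn n →L[ℝ] ℝ).contDiff (n := (⊤ : ℕ∞))); exact this
  exact h.pow k

lemma contDiff_mpow (κ : Fin n → ℕ) : ContDiff ℝ (⊤ : ℕ∞) (fun ξ : Rn n => mpow ξ κ) := by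
  unfold mpow
  classical
  induction (Finset.univ : Finset (Fin n)) using Finset.induction with
  | empty => simpa using contDiff_const
  | insert a s hni ih =>
      simp only [Finset.prod_insert hni]
      exact (contDiff_coord a (κ a)).mul ih

lemma hasFDerivAt_mpow (κ : Fin n → ℕ) (x : Rn n) :
    HasFDerivAt (fun ξ : Rn n => mpow ξ κ)
      (∑ j, (∏ l ∈ Finset.univ.erase j, ((x l : ℝ) : ℂ) ^ κ l) •
        (((κ j : ℂ) * ((x j : ℝ) : ℂ) ^ (κ j - 1)) •
          (Complex.ofRealCLM.comp (EuclideanSpace.proj j : Rn n →L[ℝ] ℝ)))) x := by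
  unfold mpow
  have hder : ∀ j ∈ (Finset.univ : Finset (Fin n)),
      HasFDerivAt (fun ξ : Rn n => ((ξ j : ℝ) : ℂ) ^ κ j)
        ((((κ j : ℂ) * ((x j : ℝ) : ℂ) ^ (κ j - 1)) •
          (Complex.ofRealCLM.comp (EuclideanSpace.proj j : Rn n →L[ℝ] ℝ)))) x := by
    intro j _
    have hg : HasFDerivAt (fun ξ : Rn n => ((ξ j : ℝ) : ℂ))
        (Complex.ofRealCLM.comp (EuclideanSpace.proj j : Rn n →L[ℝ] ℝ)) x :=
      (Complex.ofRealCLM.comp (EuclideanSpace.proj j : Rn n →L[ℝ] ℝ)).hasFDerivAt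
    have hp : HasDerivAt (fun z : ℂ => z ^ κ j) ((κ j : ℂ) * ((x j : ℝ) : ℂ) ^ (κ j - 1))
        ((x j : ℝ) : ℂ) := hasDerivAt_pow (κ j) _
    exact hp.comp_hasFDerivAt x hg
  exact HasFDerivAt.finset_prod hder

lemma pd1_mpow (i : Fin n) (κ : Fin n → ℕ) (x : Rn n) :
    pd1 i (fun ξ => mpow ξ κ) x
      = (κ i : ℂ) * mpow x (Function.update κ i (κ i - 1)) := by
  have h := (hasFDerivAt_mpow κ x).fderiv
  rw [pd1, h]
  simp only [ContinuousLinearMap.sum_apply, ContinuousLinearMap.smul_apply,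
    ContinuousLinearMap.comp_apply, smul_eq_mul]
  rw [Finset.sum_eq_single i]
  · have hproj : (EuclideanSpace.proj i : Rn n →L[ℝ] ℝ) (EuclideanSpace.single i 1) = 1 := by
      simp [EuclideanSpace.single_apply]
    rw [hproj]
    have hupd : mpow x (Function.update κ i (κ i - 1))
        = ((x i : ℝ) : ℂ) ^ (κ i - 1) * ∏ l ∈ Finset.univ.erase i, ((x l : ℝ) : ℂ) ^ κ l := by
      unfold mpow
      rw [← Finset.mul_prod_erase Finset.univ _ (Finset.mem_univ i)]
      simp only [Function.update_self]
      congr 1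
      apply Finset.prod_congr rfl
      intro l hl
      rw [Function.update_of_ne (Finset.ne_of_mem_erase hl)]
    rw [hupd]
    simp only [Complex.ofRealCLM_apply, Complex.ofReal_one]
    ring
  · intro j _ hji
    have hproj : (EuclideanSpace.proj j : Rn n →L[ℝ] ℝ) (EuclideanSpace.single i 1) = 0 := by
      simp [EuclideanSpace.single_apply, hji]
    rw [hproj]
    simp
  · intro h; exact absurd (Finset.mem_univ i) h

lemma pd1_cmon (i : Fin n) (c : ℂ) (κ : Fin n → ℕ) :
    pd1 i (fun ξ => c * mpow ξ κ)
      = fun x => (c * (κ i : ℂ)) * mpow x (Function.update κ i (κ i - 1)) := by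
  funext x
  have hd : DifferentiableAt ℝ (fun ξ : Rn n => mpow ξ κ) x :=
    (contDiff_mpow κ).differentiable (by simp) x
  rw [pd1, fderiv_const_mul hd]
  have := pd1_mpow i κ x
  rw [pd1] at this
  simp only [ContinuousLinearMap.smul_apply, smul_eq_mul]
  rw [this]; ring

lemma pd1_iter_cmon (i : Fin n) (k : ℕ) (c : ℂ) (κ : Fin n → ℕ) :
    (pd1 i)^[k] (fun ξ => c * mpow ξ κ)
      = fun x => (c * ((κ i).descFactorial k : ℂ)) * mpow x (Function.update κ i (κ i - k)) := by
  induction k with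
  | zero =>
      simp only [Function.iterate_zero, id_eq, Nat.descFactorial_zero, Nat.cast_one, mul_one,
        Nat.sub_zero]
      funext x
      rw [Function.update_eq_self]
  | succ k ih =>
      rw [Function.iterate_succ_apply', ih, pd1_cmon]
      funext x
      rw [Function.update_idem, Function.update_self]
      have : κ i - k - 1 = κ i - (k + 1) := by omega
      rw [this, Nat.descFactorial_succ]
      push_cast
      ring

lemma pd_cmon_list (B : Fin n → ℕ) (c : ℂ) (κ : Fin n → ℕ) (L : List (Fin n)) (hL : L.Nodup) :
    ((L.map fun i => (pd1 i)^[B i]).foldr (· ∘ ·) id) (fun ξ => c * mpow ξ κ)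
      = fun x => (c * ((L.map fun i => ((κ i).descFactorial (B i) : ℂ)).prod)) *
          mpow x (fun i => if i ∈ L then κ i - B i else κ i) := by
  induction L with
  | nil =>
      funext x
      simp
  | cons i M ih =>
      rcases List.nodup_cons.1 hL with ⟨hiM, hM⟩
      simp only [List.map_cons, List.foldr_cons, Function.comp_apply, List.prod_cons]
      rw [ih hM, pd1_iter_cmon]
      funext x
      have hκi : (fun j => if j ∈ M then κ j - B j else κ j) i = κ i := by simp [hiM]
      have hidx : Function.update (fun j => if j ∈ M then κ j - B j else κ j) i
            ((fun j => if j ∈ M then κ j - B j else κ j) i - B i)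
          = fun j => if j ∈ i :: M then κ j - B j else κ j := by
        funext j
        by_cases hj : j = i
        · subst hj; simp [hiM]
        · simp [Function.update_of_ne hj, hj, List.mem_cons]
      rw [hidx]
      simp only [if_neg hiM]
      ring
  
lemma pd_cmon (B : Fin n → ℕ) (c : ℂ) (κ : Fin n → ℕ) :
    pd B (fun ξ => c * mpow ξ κ)
      = fun x => (c * ((∏ i, (κ i).descFactorial (B i) : ℕ) : ℂ)) *
          mpow x (fun i => κ i - B i) := by
  unfold pd
  rw [pd_cmon_list B c κ _ (List.nodup_finRange n)]
  funext x
  have h1 : ((List.finRange n).map fun i => ((κ i).descFactorial (B i) : ℂ)).prod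
      = ((∏ i, (κ i).descFactorial (B i) : ℕ) : ℂ) := by
    rw [Nat.cast_prod, Fin.prod_univ_def]
  have h2 : (fun i => if i ∈ List.finRange n then κ i - B i else κ i)
      = fun i => κ i - B i := by
    funext i; simp [List.mem_finRange]
  rw [h1, h2]

lemma pd_mpow' (B κ : Fin n → ℕ) :
    pd B (fun ξ => mpow ξ κ)
      = fun x => ((∏ i, (κ i).descFactorial (B i) : ℕ) : ℂ) * mpow x (fun i => κ i - B i) := by
  have h : (fun ξ : Rn n => mpow ξ κ) = fun ξ => (1:ℂ) * mpow ξ κ := by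
    funext ξ; ring
  rw [h, pd_cmon]
  funext x; ring

lemma pd_mpow_vanish (B κ : Fin n → ℕ) (h : mdeg κ < mdeg B) :
    pd B (fun ξ => mpow ξ κ) = fun _ => 0 := by
  rw [pd_mpow']
  have : ∃ i, κ i < B i := by
    by_contra hc
    push_neg at hc
    exact absurd (Finset.sum_le_sum fun i _ => hc i) (by simpa [mdeg] using h)
  obtain ⟨i, hi⟩ := this
  have : (∏ j, (κ j).descFactorial (B j)) = 0 :=
    Finset.prod_eq_zero (Finset.mem_univ i) (Nat.descFactorial_eq_zero_iff_lt.2 hi)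
  funext x
  rw [this]
  simp

lemma slowScale_const (c : ℝ) (hc : 0 < c) : SlowScale (fun _ => c) := by
  refine ⟨fun ε _ => hc, fun p hp => ⟨max (c ^ p) 1, lt_of_lt_of_le one_pos (le_max_right _ _),
    1/2, by norm_num, fun ε hε => ?_⟩⟩
  have h1 : c ^ p ≤ max (c ^ p) 1 := le_max_left _ _
  have h2 : max (c ^ p) 1 ≤ max (c ^ p) 1 / ε := by
    rw [le_div_iff₀ hε.1]
    nlinarith [hε.2, le_max_right (c^p) 1]
  linarith

lemma slowScale_add {r s : ℝ → ℝ} (hr : SlowScale r) (hs : SlowScale s) :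
    SlowScale (fun ε => r ε + s ε) := by
  obtain ⟨hrp, hrb⟩ := hr
  obtain ⟨hsp, hsb⟩ := hs
  refine ⟨fun ε hε => add_pos (hrp ε hε) (hsp ε hε), fun p hp => ?_⟩
  obtain ⟨C₁, hC₁, ε₁, hε₁, hb₁⟩ := hrb p hp
  obtain ⟨C₂, hC₂, ε₂, hε₂, hb₂⟩ := hsb p hp
  refine ⟨(2:ℝ) ^ p * (C₁ + C₂), by positivity, min ε₁ ε₂,
    ⟨lt_min hε₁.1 hε₂.1, lt_of_le_of_lt (min_le_left _ _) hε₁.2⟩, fun ε hε => ?_⟩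
  have hε₀ : ε ∈ Set.Ioo (0:ℝ) ε₁ := ⟨hε.1, lt_of_lt_of_le hε.2 (min_le_left _ _)⟩
  have hε₀' : ε ∈ Set.Ioo (0:ℝ) ε₂ := ⟨hε.1, lt_of_lt_of_le hε.2 (min_le_right _ _)⟩
  have hεIoc : ε ∈ Set.Ioc (0:ℝ) 1 := ⟨hε.1, le_of_lt (lt_trans hε₀.2 hε₁.2)⟩
  have hrε := hrp ε hεIoc
  have hsε := hsp ε hεIoc
  have key : (r ε + s ε) ^ p ≤ 2 ^ p * (r ε ^ p + s ε ^ p) := by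
    have h1 : r ε + s ε ≤ 2 * max (r ε) (s ε) := by
      rcases max_cases (r ε) (s ε) with ⟨h, h'⟩ | ⟨h, h'⟩ <;> rw [h] <;> linarith
    have h2 : (r ε + s ε) ^ p ≤ (2 * max (r ε) (s ε)) ^ p :=
      Real.rpow_le_rpow (by positivity) h1 (le_of_lt hp)
    have h3 : (2 * max (r ε) (s ε)) ^ p = 2 ^ p * (max (r ε) (s ε)) ^ p :=
      Real.mul_rpow (by norm_num) (by positivity)
    have h4 : (max (r ε) (s ε)) ^ p ≤ r ε ^ p + s ε ^ p := by
      rcases max_cases (r ε) (s ε) with ⟨h, _⟩ | ⟨h, _⟩ <;> rw [h] <;>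
        [nlinarith [Real.rpow_pos_of_pos hsε p]; nlinarith [Real.rpow_pos_of_pos hrε p]]
    calc (r ε + s ε) ^ p ≤ 2 ^ p * (max (r ε) (s ε)) ^ p := by rw [← h3]; exact h2
      _ ≤ 2 ^ p * (r ε ^ p + s ε ^ p) := by
          have : (0:ℝ) < 2 ^ p := Real.rpow_pos_of_pos (by norm_num) p
          nlinarith
  have hb : r ε ^ p + s ε ^ p ≤ (C₁ + C₂) / ε := by
    have h1 := hb₁ ε hε₀
    have h2 := hb₂ ε hε₀'
    have h3 : C₁ / ε + C₂ / ε = (C₁ + C₂) / ε := by ring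
    linarith
  show (r ε + s ε) ^ p ≤ 2 ^ p * (C₁ + C₂) / ε
  calc (r ε + s ε) ^ p ≤ 2 ^ p * (r ε ^ p + s ε ^ p) := key
    _ ≤ 2 ^ p * ((C₁ + C₂) / ε) := by
        have : (0:ℝ) < 2 ^ p := Real.rpow_pos_of_pos (by norm_num) p
        nlinarith
    _ = 2 ^ p * (C₁ + C₂) / ε := by ring

lemma slowScale_one_add_sum {ι : Type*} (S : Finset ι) (f : ι → ℝ → ℝ)
    (hf : ∀ i ∈ S, SlowScale (f i)) :
    SlowScale (fun ε => 1 + ∑ i ∈ S, f i ε) := by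
  classical
  induction S using Finset.induction with
  | empty => simpa using slowScale_const 1 one_pos
  | insert a s hnotmem ih =>
      have h1 : (fun ε => 1 + ∑ i ∈ insert a s, f i ε)
          = fun ε => f a ε + (1 + ∑ i ∈ s, f i ε) := by
        funext ε; rw [Finset.sum_insert hnotmem]; ring
      rw [h1]
      exact slowScale_add (hf a (Finset.mem_insert_self a s))
        (ih fun i hi => hf i (Finset.mem_insert_of_mem hi))

lemma stmt13_sep {m : ℕ} {U : Set (Rn n)} (hU : IsOpen U) (a : (Fin n → ℕ) → ℝ → Rn n → ℂ) (ε : ℝ)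
    (ha : ∀ σ ∈ midx n m, ContDiffOn ℝ (⊤ : ℕ∞) (a σ ε) U) (A T : Fin n → ℕ) {x : Rn n} (hx : x ∈ U)
    (ξ : Rn n) :
    pdx A (pdxi T (Psym m a ε)) x ξ
      = ∑ σ' ∈ midx n m, pd A (a σ' ε) x * pd T (fun η => mpow η σ') ξ := by
  have hinner : ∀ y ξ0, pdxi T (Psym m a ε) y ξ0
      = ∑ σ' ∈ midx n m, a σ' ε y * pd T (fun η => mpow η σ') ξ0 := by
    intro y ξ0
    show pd T (fun η => ∑ σ' ∈ midx n m, a σ' ε y * mpow η σ') ξ0 = _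
    rw [pd_finset_sum isOpen_univ (midx n m) (fun σ' η => a σ' ε y * mpow η σ')
      (fun σ' _ => ((contDiff_const.mul (contDiff_mpow σ')).contDiffOn)) T (Set.mem_univ ξ0)]
    exact Finset.sum_congr rfl fun σ' _ =>
      pd_const_mul isOpen_univ (contDiff_mpow σ').contDiffOn (a σ' ε y) T (Set.mem_univ ξ0)
  show pd A (fun y => pdxi T (Psym m a ε) y ξ) x = _
  have hfun : (fun y => pdxi T (Psym m a ε) y ξ)
      = fun y => ∑ σ' ∈ midx n m, a σ' ε y * pd T (fun η => mpow η σ') ξ := by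
    funext y; exact hinner y ξ
  rw [hfun]
  rw [pd_finset_sum hU (midx n m) (fun σ' y => a σ' ε y * pd T (fun η => mpow η σ') ξ)
    (fun σ' hσ' => (ha σ' hσ').mul contDiffOn_const) A hx]
  refine Finset.sum_congr rfl fun σ' hσ' => ?_
  have hcomm : (fun y => a σ' ε y * pd T (fun η => mpow η σ') ξ)
      = fun y => pd T (fun η => mpow η σ') ξ * a σ' ε y := by
    funext y; ring
  rw [hcomm, pd_const_mul hU (ha σ' hσ') _ A hx]
  ring

lemma stmt13_key {m : ℕ} {U : Set (Rn n)} (hU : IsOpen U) (a : (Fin n → ℕ) → ℝ → Rn n → ℂ) (ε : ℝ)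
    (ha : ∀ σ ∈ midx n m, ContDiffOn ℝ (⊤ : ℕ∞) (a σ ε) U) (c : (Fin n → ℕ) → ℂ) (A T : Fin n → ℕ)
    {x : Rn n} (hx : x ∈ U) (ξ : Rn n) :
    pdx A (pdxi T (fun x' ξ' => ∑ σ ∈ midx n m,
        c σ * pdx σ (pdxi σ (Psym m a ε)) x' ξ')) x ξ
      = ∑ σ ∈ midx n m, c σ *
          pdx (fun i => A i + σ i) (pdxi (fun i => T i + σ i) (Psym m a ε)) x ξ := by
  have hmp : ∀ σ σ' : Fin n → ℕ, ContDiffOn ℝ (⊤ : ℕ∞) (pd σ (fun η => mpow η σ')) Set.univ :=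
    fun σ σ' => pd_smooth isOpen_univ (contDiff_mpow σ').contDiffOn σ
  have hpa : ∀ σ : Fin n → ℕ, ∀ σ' ∈ midx n m, ContDiffOn ℝ (⊤ : ℕ∞) (pd σ (a σ' ε)) U :=
    fun σ σ' hσ' => pd_smooth hU (ha σ' hσ') σ
  -- step 1: inner ξ-derivative, for y ∈ U
  have h2 : ∀ y ∈ U, pdxi T (fun x' ξ' => ∑ σ ∈ midx n m,
        c σ * pdx σ (pdxi σ (Psym m a ε)) x' ξ') y ξ
      = ∑ σ ∈ midx n m, c σ * ∑ σ' ∈ midx n m,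
          pd σ (a σ' ε) y * pd T (pd σ (fun η => mpow η σ')) ξ := by
    intro y hy
    show pd T (fun η => ∑ σ ∈ midx n m, c σ * pdx σ (pdxi σ (Psym m a ε)) y η) ξ = _
    have h1 : (fun η => ∑ σ ∈ midx n m, c σ * pdx σ (pdxi σ (Psym m a ε)) y η)
        = fun η => ∑ σ ∈ midx n m, c σ * ∑ σ' ∈ midx n m,
            pd σ (a σ' ε) y * pd σ (fun η' => mpow η' σ') η := by
      funext η
      exact Finset.sum_congr rfl fun σ _ => by rw [stmt13_sep hU a ε ha σ σ hy η]
    rw [h1]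
    have hsm : ∀ σ ∈ midx n m, ContDiffOn ℝ (⊤ : ℕ∞) (fun η => c σ * ∑ σ' ∈ midx n m,
        pd σ (a σ' ε) y * pd σ (fun η' => mpow η' σ') η) Set.univ := by
      intro σ _
      exact contDiffOn_const.mul (ContDiffOn.sum fun σ' _ => contDiffOn_const.mul (hmp σ σ'))
    rw [pd_finset_sum isOpen_univ (midx n m) _ hsm T (Set.mem_univ ξ)]
    refine Finset.sum_congr rfl fun σ _ => ?_
    have hsum : ContDiffOn ℝ (⊤ : ℕ∞) (fun η => ∑ σ' ∈ midx n m,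
        pd σ (a σ' ε) y * pd σ (fun η' => mpow η' σ') η) Set.univ :=
      ContDiffOn.sum fun σ' _ => contDiffOn_const.mul (hmp σ σ')
    rw [pd_const_mul isOpen_univ hsum (c σ) T (Set.mem_univ ξ)]
    beta_reduce
    congr 1
    rw [pd_finset_sum isOpen_univ (midx n m) _
      (fun σ' _ => contDiffOn_const.mul (hmp σ σ')) T (Set.mem_univ ξ)]
    refine Finset.sum_congr rfl fun σ' _ => ?_
    rw [pd_const_mul isOpen_univ (hmp σ σ') _ T (Set.mem_univ ξ)]
  -- step 2: outer x-derivative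
  show pd A (fun y => pdxi T (fun x' ξ' => ∑ σ ∈ midx n m,
      c σ * pdx σ (pdxi σ (Psym m a ε)) x' ξ') y ξ) x = _
  rw [pd_congr hU (fun y hy => h2 y hy) A hx]
  rw [pd_finset_sum hU (midx n m)
    (fun σ y => c σ * ∑ σ' ∈ midx n m, pd σ (a σ' ε) y * pd T (pd σ (fun η => mpow η σ')) ξ)
    (fun σ _ => contDiffOn_const.mul (ContDiffOn.sum fun σ' hσ' =>
      (hpa σ σ' hσ').mul contDiffOn_const)) A hx]
  refine Finset.sum_congr rfl fun σ hσ => ?_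
  have hsumU : ContDiffOn ℝ (⊤ : ℕ∞) (fun y => ∑ σ' ∈ midx n m,
      pd σ (a σ' ε) y * pd T (pd σ (fun η => mpow η σ')) ξ) U :=
    ContDiffOn.sum fun σ' hσ' => (hpa σ σ' hσ').mul contDiffOn_const
  rw [pd_const_mul hU hsumU (c σ) A hx]
  beta_reduce
  congr 1
  rw [pd_finset_sum hU (midx n m) _
    (fun σ' hσ' => (hpa σ σ' hσ').mul contDiffOn_const) A hx]
  rw [stmt13_sep hU a ε ha (fun i => A i + σ i) (fun i => T i + σ i) hx ξ]
  refine Finset.sum_congr rfl fun σ' hσ' => ?_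
  have hcomm : (fun y => pd σ (a σ' ε) y * pd T (pd σ (fun η => mpow η σ')) ξ)
      = fun y => pd T (pd σ (fun η => mpow η σ')) ξ * pd σ (a σ' ε) y := by
    funext y; ring
  rw [hcomm, pd_const_mul hU (hpa σ σ' hσ') _ A hx]
  rw [(pd_index_add hU (ha σ' hσ') A σ hx)]
  rw [(pd_index_add isOpen_univ (contDiff_mpow σ').contDiffOn T σ (Set.mem_univ ξ))]
  ring

end Aux

/-- Step 1 of the proof of Theorem 3.2 — estimates on the
    derivatives of the transposed symbol. -/
theorem stmt13 {n m : ℕ} (U Γ : Set (Rn n)) (hU : IsOpen U)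
    (hΓo : IsOpen Γ) (hΓc : IsCone Γ) (hΓ0 : (0 : Rn n) ∉ Γ)
    (a : (Fin n → ℕ) → ℝ → Rn n → ℂ)
    (hasm : ∀ σ ∈ midx n m, ∀ ε ∈ Set.Ioc (0:ℝ) 1, ContDiffOn ℝ (⊤ : ℕ∞) (a σ ε) U)
    (δ ρ : ℝ) (hδ0 : 0 ≤ δ) (hδρ : δ < ρ) (hρ1 : ρ ≤ 1)
    (hmh2 : ∀ K : Set (Rn n), IsCompact K → K ⊆ U →
      MH2 m (fun ε => Psym m a ε) K Γ δ ρ)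
    (tQ : ℝ → Rn n → Rn n → ℂ)
    (htQ : ∀ ε x η, tQ ε x η = tsymb m (Psym m a ε) x η) :
    ∀ K : Set (Rn n), IsCompact K → K ⊆ U → ∀ α β γ : Fin n → ℕ,
      ∃ S : ℝ → ℝ, SlowScale S ∧ ∃ p : ℝ → ℝ, SlowScale p ∧ ∃ μ > (0:ℝ),
        ∀ ε ∈ Set.Ioo (0:ℝ) μ, ∀ x ∈ K, ∀ ξ ∈ Γ, p ε ≤ ‖ξ‖ →
          ‖pdx α (pdxi (fun i => γ i + β i) (fun x' ξ' => tQ ε x' (-ξ'))) x ξ‖ ≤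
            S ε * ‖Psym m a ε x ξ‖ *
              (1 + ‖ξ‖) ^ (-(ρ * (mdeg (fun i => γ i + β i) : ℝ)) + δ * (mdeg α : ℝ)) := by
  intro K hK hKU α β γ
  classical
  obtain hmh2K := hmh2 K hK hKU
  choose s hs r hr ε₁ hε₁ hbound using hmh2K
  set τ : Fin n → ℕ := fun i => γ i + β i with hτ
  set A' : (Fin n → ℕ) → (Fin n → ℕ) := fun σ i => α i + σ i with hA'
  have hne : (midx n m).Nonempty := by
    refine ⟨fun _ => 0, ?_⟩
    rw [midx, Finset.mem_filter, Finset.mem_Icc]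
    exact ⟨⟨fun i => le_refl 0, fun i => Nat.zero_le m⟩, by simp [mdeg]⟩
  refine ⟨fun ε => 1 + ∑ σ ∈ midx n m, s (A' σ) ε,
    slowScale_one_add_sum _ _ (fun σ _ => hs (A' σ)),
    fun ε => 1 + ∑ σ ∈ midx n m, r (A' σ) ε,
    slowScale_one_add_sum _ _ (fun σ _ => hr (A' σ)),
    min 1 ((midx n m).inf' hne fun σ => ε₁ (A' σ)),
    lt_min one_pos ((Finset.lt_inf'_iff hne).2 fun σ _ => hε₁ (A' σ)), ?_⟩
  intro ε hε x hxK ξ hξΓ hpξ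
  have hε1 : ε ∈ Set.Ioc (0:ℝ) 1 := ⟨hε.1, le_of_lt (lt_of_lt_of_le hε.2 (min_le_left _ _))⟩
  have hxU : x ∈ U := hKU hxK
  have ha : ∀ σ ∈ midx n m, ContDiffOn ℝ (⊤ : ℕ∞) (a σ ε) U := fun σ hσ => hasm σ hσ ε hε1
  -- constants
  set c : (Fin n → ℕ) → ℂ := fun σ => ((-1 : ℂ) ^ mdeg σ / mfactC σ) with hc
  have hcle : ∀ σ : Fin n → ℕ, ‖c σ‖ ≤ 1 := by
    intro σ
    have hN : 1 ≤ (∏ i, Nat.factorial (σ i)) :=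
      Nat.one_le_iff_ne_zero.2 (Finset.prod_ne_zero_iff.2
        fun i _ => Nat.factorial_ne_zero _)
    have : ‖c σ‖ = 1 / ((∏ i, Nat.factorial (σ i) : ℕ) : ℝ) := by
      rw [hc]
      simp [mfactC, norm_div]
    rw [this]
    rw [div_le_one (by exact_mod_cast Nat.lt_of_lt_of_le Nat.zero_lt_one hN)]
    exact_mod_cast hN
  -- rewrite the symbol
  have hQfun : (fun x' ξ' => tQ ε x' (-ξ'))
      = fun x' ξ' => ∑ σ ∈ midx n m, c σ * pdx σ (pdxi σ (Psym m a ε)) x' ξ' := by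
    funext x' ξ'
    rw [htQ]
    unfold tsymb
    simp [hc]
  rw [hQfun, stmt13_key hU a ε ha c α τ hxU ξ]
  -- notation for the RHS pieces
  set e : ℝ := -(ρ * (mdeg τ : ℝ)) + δ * (mdeg α : ℝ) with he
  set X : ℝ := ‖Psym m a ε x ξ‖ * (1 + ‖ξ‖) ^ e with hX
  have hXnn : 0 ≤ X := by
    rw [hX]
    have : (0:ℝ) ≤ (1 + ‖ξ‖) ^ e := Real.rpow_nonneg (by positivity) e
    positivity
  have hbase : (1:ℝ) ≤ 1 + ‖ξ‖ := by
    have := norm_nonneg ξ; linarith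
  -- per-term estimate
  have hterm : ∀ σ ∈ midx n m,
      ‖c σ * pdx (fun i => α i + σ i) (pdxi (fun i => τ i + σ i) (Psym m a ε)) x ξ‖
        ≤ s (A' σ) ε * X := by
    intro σ hσ
    have hsnn : 0 ≤ s (A' σ) ε := ((hs (A' σ)).1 ε hε1).le
    have hstep : ‖pdx (A' σ) (pdxi (fun i => τ i + σ i) (Psym m a ε)) x ξ‖
        ≤ s (A' σ) ε * X := by
      by_cases hdeg : mdeg (fun i => τ i + σ i) ≤ m
      · -- apply (mh₂)
        have hεA : ε ∈ Set.Ioo (0:ℝ) (ε₁ (A' σ)) :=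
          ⟨hε.1, lt_of_lt_of_le hε.2 (le_trans (min_le_right _ _) (Finset.inf'_le _ hσ))⟩
        have hpξ' : 1 + ∑ σ' ∈ midx n m, r (A' σ') ε ≤ ‖ξ‖ := hpξ
        have hrε : r (A' σ) ε ≤ ‖ξ‖ := by
          refine le_trans ?_ hpξ'
          have h1 : r (A' σ) ε ≤ ∑ σ' ∈ midx n m, r (A' σ') ε :=
            Finset.single_le_sum (fun σ' _ => ((hr (A' σ')).1 ε hε1).le) hσ
          linarith
        have hb := hbound (A' σ) (fun i => τ i + σ i) hdeg ε hεA x hxK ξ hξΓ hrε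
        have hmono : (1 + ‖ξ‖) ^ (δ * (mdeg (A' σ) : ℝ) - ρ * (mdeg (fun i => τ i + σ i) : ℝ))
            ≤ (1 + ‖ξ‖) ^ e := by
          apply Real.rpow_le_rpow_of_exponent_le hbase
          have h1 : (mdeg (A' σ) : ℝ) = (mdeg α : ℝ) + (mdeg σ : ℝ) := by
            rw [hA']
            push_cast [mdeg, Finset.sum_add_distrib]
            ring
          have h2 : (mdeg (fun i => τ i + σ i) : ℝ) = (mdeg τ : ℝ) + (mdeg σ : ℝ) := by
            push_cast [mdeg, Finset.sum_add_distrib]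
            ring
          rw [h1, h2, he]
          have hσnn : (0:ℝ) ≤ (mdeg σ : ℝ) := Nat.cast_nonneg _
          nlinarith [le_of_lt hδρ]
        calc ‖pdx (A' σ) (pdxi (fun i => τ i + σ i) (Psym m a ε)) x ξ‖
            ≤ s (A' σ) ε * ‖Psym m a ε x ξ‖ *
                (1 + ‖ξ‖) ^ (δ * (mdeg (A' σ) : ℝ) - ρ * (mdeg (fun i => τ i + σ i) : ℝ)) := hb
          _ ≤ s (A' σ) ε * ‖Psym m a ε x ξ‖ * (1 + ‖ξ‖) ^ e := by
              apply mul_le_mul_of_nonneg_left hmono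
              positivity
          _ = s (A' σ) ε * X := by rw [hX]; ring
      · -- over-differentiated: the term vanishes
        have hzero : pdx (A' σ) (pdxi (fun i => τ i + σ i) (Psym m a ε)) x ξ = 0 := by
          rw [stmt13_sep hU a ε ha (A' σ) (fun i => τ i + σ i) hxU ξ]
          apply Finset.sum_eq_zero
          intro σ' hσ'
          have hmem : mdeg σ' ≤ m := (Finset.mem_filter.1 hσ').2
          have hvan := pd_mpow_vanish (fun i => τ i + σ i) σ'
            (by omega : mdeg σ' < mdeg (fun i => τ i + σ i))
          rw [hvan]
          simp
        rw [hzero]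
        simp only [norm_zero]
        positivity
    calc ‖c σ * pdx (fun i => α i + σ i) (pdxi (fun i => τ i + σ i) (Psym m a ε)) x ξ‖
        = ‖c σ‖ * ‖pdx (A' σ) (pdxi (fun i => τ i + σ i) (Psym m a ε)) x ξ‖ := by
          rw [norm_mul]
      _ ≤ 1 * (s (A' σ) ε * X) := by
          apply mul_le_mul (hcle σ) hstep (norm_nonneg _) zero_le_one
      _ = s (A' σ) ε * X := one_mul _
  -- sum up
  calc ‖∑ σ ∈ midx n m,
        c σ * pdx (fun i => α i + σ i) (pdxi (fun i => τ i + σ i) (Psym m a ε)) x ξ‖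
      ≤ ∑ σ ∈ midx n m,
          ‖c σ * pdx (fun i => α i + σ i) (pdxi (fun i => τ i + σ i) (Psym m a ε)) x ξ‖ :=
        norm_sum_le _ _
    _ ≤ ∑ σ ∈ midx n m, s (A' σ) ε * X := Finset.sum_le_sum hterm
    _ = (∑ σ ∈ midx n m, s (A' σ) ε) * X := by rw [Finset.sum_mul]
    _ ≤ (1 + ∑ σ ∈ midx n m, s (A' σ) ε) * X := by nlinarith
    _ = (1 + ∑ σ ∈ midx n m, s (A' σ) ε) * ‖Psym m a ε x ξ‖ * (1 + ‖ξ‖) ^ e := by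
        rw [hX]; ring


end
end
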